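/- arXiv:2210.12981 — 6 statements merged into one kernel-verified Lean document; each statement's English description precedes it below -/
import Mathlib

section
/- Let G be a connected graph on n vertices with m ≥ 1 edges. Then the first Zagreb index satisfies M₁(G) ≥ 4m²/n + Irr(G)²/(m·n), where M₁(G) = ∑_{u∈V} deg(u)² and Irr(G) = ∑_{(u,v)∈E}|deg(u)−deg(v)|. -/
/-- The Albertson irregularity index of a graph. -/
noncomputable def albertson {V : Type*} [Fintype V] [DecidableEq V]
    (G : SimpleGraph V) [DecidableRel G.Adj] : ℝ :=
  ∑ e ∈ G.edgeFinset,
    Sym2.lift ⟨fun u v => |(G.degree u : ℝ) - (G.degree v : ℝ)|,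
      fun u v => abs_sub_comm _ _⟩ e

/-!
With `d` the degree function, Lagrange's identity and the handshake lemma give
`n * M₁ - 4 * m ^ 2 = ½ ∑_{u,v} (d u - d v) ^ 2`. The double sum counts every edge twice,
so this is at least `∑_{uv ∈ E} (d u - d v) ^ 2`, which by Cauchy–Schwarz over the `m` edges
is at least `Irr ^ 2 / m`.
-/

open Finset

theorem Finset.sum_sum_sub_sq {ι R : Type*} [CommRing R] (s : Finset ι) (f : ι → R) :
    ∑ i ∈ s, ∑ j ∈ s, (f i - f j) ^ 2 = 2 * (#s * ∑ i ∈ s, f i ^ 2 - (∑ i ∈ s, f i) ^ 2) := by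
  simp only [sub_sq, sum_add_distrib, sum_sub_distrib, sum_const, nsmul_eq_mul, ← mul_sum,
    ← sum_mul]
  ring

namespace SimpleGraph

variable {V : Type*} [Fintype V] [DecidableEq V] (G : SimpleGraph V) [DecidableRel G.Adj]

theorem two_nsmul_sum_edgeFinset_eq_sum_adj {M : Type*} [AddCommMonoid M] (f : Sym2 V → M) :
    2 • ∑ e ∈ G.edgeFinset, f e = ∑ p : V × V with G.Adj p.1 p.2, f s(p.1, p.2) := by
  have hdarts : ∑ p : V × V with G.Adj p.1 p.2, f s(p.1, p.2) = ∑ d : G.Dart, f d.edge :=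
    sum_bij' (fun p hp ↦ ⟨p, (mem_filter.1 hp).2⟩) (fun d _ ↦ d.toProd) (by simp)
      (fun d _ ↦ by simp [d.adj]) (by simp) (by simp) (by simp [Dart.edge])
  rw [hdarts, ← sum_fiberwise_of_maps_to (g := Dart.edge) (t := G.edgeFinset)
    (fun d _ ↦ mem_edgeFinset.2 d.edge_mem), smul_sum]
  refine sum_congr rfl fun e he ↦ ?_
  rw [sum_congr rfl fun d hd ↦ congrArg f (mem_filter.1 hd).2, sum_const,
    G.dart_edge_fiber_card e (mem_edgeFinset.1 he)]

theorem two_nsmul_sum_edgeFinset_le_sum_sum {M : Type*} [AddCommMonoid M] [PartialOrder M]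
    [IsOrderedAddMonoid M] (f : Sym2 V → M) (hf : ∀ e, 0 ≤ f e) :
    2 • ∑ e ∈ G.edgeFinset, f e ≤ ∑ u, ∑ v, f s(u, v) := by
  rw [two_nsmul_sum_edgeFinset_eq_sum_adj, ← Fintype.sum_prod_type']
  exact sum_le_sum_of_subset_of_nonneg (filter_subset _ _) fun p _ _ ↦ hf _

end SimpleGraph

theorem stmt5_general {V : Type*} [Fintype V] [DecidableEq V] (G : SimpleGraph V)
    [DecidableRel G.Adj] :
    ∑ u : V, (G.degree u : ℝ) ^ 2 ≥
      4 * (G.edgeFinset.card : ℝ) ^ 2 / Fintype.card V +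
        albertson G ^ 2 / (G.edgeFinset.card * (Fintype.card V : ℝ)) := by
  set n : ℝ := (Fintype.card V : ℝ)
  set m : ℝ := (#G.edgeFinset : ℝ)
  set irr : Sym2 V → ℝ := Sym2.lift ⟨fun u v => |(G.degree u : ℝ) - G.degree v|,
    fun _ _ => abs_sub_comm _ _⟩
  set S := ∑ e ∈ G.edgeFinset, irr e ^ 2
  have hS : 0 ≤ S := sum_nonneg fun _ _ ↦ sq_nonneg _
  have cauchy_schwarz : albertson G ^ 2 / m ≤ S :=
    div_le_of_le_mul₀ (Nat.cast_nonneg _) hS <| by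
      rw [mul_comm]; exact sq_sum_le_card_mul_sum_sq
  have handshake : ∑ u, (G.degree u : ℝ) = 2 * m := by
    simp only [m]; exact_mod_cast G.sum_degrees_eq_twice_card_edges
  have lagrange : 2 * S ≤ 2 * (n * ∑ u, (G.degree u : ℝ) ^ 2 - (2 * m) ^ 2) := by
    have := G.two_nsmul_sum_edgeFinset_le_sum_sum (fun e ↦ irr e ^ 2) fun _ ↦ sq_nonneg _
    simpa only [nsmul_eq_mul, Nat.cast_ofNat, irr, Sym2.lift_mk, sq_abs, sum_sum_sub_sq,
      card_univ, handshake] using this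
  rw [ge_iff_le, ← div_div, ← add_div]
  exact div_le_of_le_mul₀ (Nat.cast_nonneg _) (by positivity) (by linarith)

theorem stmt5 {V : Type*} [Fintype V] [DecidableEq V] (G : SimpleGraph V)
    [DecidableRel G.Adj] (hG : G.Connected) (hm : 1 ≤ G.edgeFinset.card) :
    ∑ u : V, (G.degree u : ℝ) ^ 2 ≥
      4 * (G.edgeFinset.card : ℝ) ^ 2 / Fintype.card V +
        albertson G ^ 2 / (G.edgeFinset.card * (Fintype.card V : ℝ)) :=
  stmt5_general G
end

section
/- Let d₁,…,dₙ be the vertex degrees of a connected graph G with m ≥ 1 edges. Then ∑ᵢ dᵢ² ≥ (∑ᵢ dᵢ)²/n + (∑_{i∼j} |dᵢ − dⱼ|)²/(m·n), where the inner sum is over edges of G. -/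
/-!
For any `f : V → ℝ`, Lagrange's identity gives
`n ∑ f i ^ 2 - (∑ f i) ^ 2 = ½ ∑_{i,j} (f i - f j) ^ 2`, and the right-hand side dominates the
sum of `(f u - f v) ^ 2` over the edges `uv`. By Cauchy–Schwarz the latter is at least
`(∑_{uv} |f u - f v|) ^ 2 / m`.
-/

open Finset

def Sym2.absDiff {V : Type*} (f : V → ℝ) : Sym2 V → ℝ :=
  Sym2.lift ⟨fun u v => |f u - f v|, fun _ _ => abs_sub_comm _ _⟩

namespace SimpleGraph

variable {V : Type*} [Fintype V] (G : SimpleGraph V) [DecidableRel G.Adj]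

theorem sum_darts_edge_eq_two_nsmul_sum_edgeFinset [DecidableEq V] {M : Type*}
    [AddCommMonoid M] (g : Sym2 V → M) :
    ∑ d : G.Dart, g d.edge = 2 • ∑ e ∈ G.edgeFinset, g e := by
  rw [← sum_fiberwise_of_maps_to (g := Dart.edge) (t := G.edgeFinset)
    (fun d _ => mem_edgeFinset.2 d.edge_mem), smul_sum]
  refine sum_congr rfl fun e he => ?_
  rw [sum_congr rfl fun d hd => congrArg g (mem_filter.1 hd).2, sum_const,
    G.dart_edge_fiber_card e (mem_edgeFinset.1 he)]

theorem sum_darts_le_sum_pairs (h : V × V → ℝ) (hh : 0 ≤ h) :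
    ∑ d : G.Dart, h d.toProd ≤ ∑ p : V × V, h p :=
  calc ∑ d : G.Dart, h d.toProd
      = ∑ p ∈ univ.map ⟨Dart.toProd, Dart.toProd_injective⟩, h p :=
        (sum_map univ ⟨Dart.toProd, Dart.toProd_injective⟩ h).symm
    _ ≤ ∑ p : V × V, h p := sum_le_univ_sum_of_nonneg fun p => hh p

theorem sum_edgeFinset_absDiff_sq_le (f : V → ℝ) :
    ∑ e ∈ G.edgeFinset, Sym2.absDiff f e ^ 2 ≤
      Fintype.card V * ∑ i, f i ^ 2 - (∑ i, f i) ^ 2 := by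
  classical
  have hdarts : ∑ d : G.Dart, (f d.fst - f d.snd) ^ 2 =
      2 * ∑ e ∈ G.edgeFinset, Sym2.absDiff f e ^ 2 :=
    calc ∑ d : G.Dart, (f d.fst - f d.snd) ^ 2
        = ∑ d : G.Dart, Sym2.absDiff f d.edge ^ 2 := sum_congr rfl fun d _ => (sq_abs _).symm
      _ = 2 * ∑ e ∈ G.edgeFinset, Sym2.absDiff f e ^ 2 := by
        rw [G.sum_darts_edge_eq_two_nsmul_sum_edgeFinset (Sym2.absDiff f · ^ 2), two_nsmul,
          two_mul]
  have hpairs : ∑ p : V × V, (f p.1 - f p.2) ^ 2 =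
      2 * (Fintype.card V * ∑ i, f i ^ 2 - (∑ i, f i) ^ 2) := by
    rw [Fintype.sum_prod_type, ← card_univ]
    exact sum_sum_sub_sq univ f
  have := G.sum_darts_le_sum_pairs (fun p => (f p.1 - f p.2) ^ 2) fun p => sq_nonneg _
  linarith

theorem sq_sum_edgeFinset_absDiff_le (f : V → ℝ) :
    (∑ e ∈ G.edgeFinset, Sym2.absDiff f e) ^ 2 ≤
      #G.edgeFinset * (Fintype.card V * ∑ i, f i ^ 2 - (∑ i, f i) ^ 2) :=
  sq_sum_le_card_mul_sum_sq.trans <|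
    mul_le_mul_of_nonneg_left (G.sum_edgeFinset_absDiff_sq_le f) (Nat.cast_nonneg _)

theorem sq_sum_div_card_add_sq_sum_edgeFinset_absDiff_div_le (f : V → ℝ) :
    (∑ i, f i) ^ 2 / Fintype.card V +
        (∑ e ∈ G.edgeFinset, Sym2.absDiff f e) ^ 2 / (#G.edgeFinset * Fintype.card V) ≤
      ∑ i, f i ^ 2 := by
  set n : ℝ := (Fintype.card V : ℝ)
  set gap := n * ∑ i, f i ^ 2 - (∑ i, f i) ^ 2
  have hgap_nonneg : 0 ≤ gap :=
    (G.sum_edgeFinset_absDiff_sq_le f).trans' (sum_nonneg fun _ _ => sq_nonneg _)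
  have hgap : (∑ e ∈ G.edgeFinset, Sym2.absDiff f e) ^ 2 / #G.edgeFinset ≤ gap :=
    div_le_of_le_mul₀ (Nat.cast_nonneg _) hgap_nonneg
      ((G.sq_sum_edgeFinset_absDiff_le f).trans_eq (mul_comm _ _))
  rw [← div_div, ← add_div]
  exact div_le_of_le_mul₀ (Nat.cast_nonneg _) (by positivity) (by linarith)

end SimpleGraph

theorem stmt7_general {V : Type*} [Fintype V] (G : SimpleGraph V)
    [DecidableRel G.Adj]
    (d : V → ℕ) :
    ∑ i : V, (d i : ℝ) ^ 2 ≥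
      (∑ i : V, (d i : ℝ)) ^ 2 / Fintype.card V +
        (∑ e ∈ G.edgeFinset,
            Sym2.lift ⟨fun u v => |(d u : ℝ) - (d v : ℝ)|,
              fun u v => abs_sub_comm _ _⟩ e) ^ 2 /
          (G.edgeFinset.card * (Fintype.card V : ℝ)) :=
  G.sq_sum_div_card_add_sq_sum_edgeFinset_absDiff_div_le fun i => (d i : ℝ)

theorem stmt7 {V : Type*} [Fintype V] [DecidableEq V] (G : SimpleGraph V)
    [DecidableRel G.Adj] (hG : G.Connected) (hm : 1 ≤ G.edgeFinset.card)
    (d : V → ℕ) (hd : ∀ i, d i = G.degree i) :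
    ∑ i : V, (d i : ℝ) ^ 2 ≥
      (∑ i : V, (d i : ℝ)) ^ 2 / Fintype.card V +
        (∑ e ∈ G.edgeFinset,
            Sym2.lift ⟨fun u v => |(d u : ℝ) - (d v : ℝ)|,
              fun u v => abs_sub_comm _ _⟩ e) ^ 2 /
          (G.edgeFinset.card * (Fintype.card V : ℝ)) :=
  stmt7_general G d
end

section
/- Let G be a connected graph on n vertices with m edges, and suppose the graph energy satisfies E(G) ≤ ∑_{v∈V} √deg(v). Then E(G) ≤ √(2mn − IRB(G)), where IRB(G) = ∑_{(u,v)∈E}(√deg(u) − √deg(v))² and E(G) is the sum of absolute values of the adjacency eigenvalues. -/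
/-- The adjacency matrix of a graph is Hermitian (over `ℝ`). -/
theorem adjMatrix_isHermitian {V : Type*} [Fintype V] (G : SimpleGraph V)
    [DecidableRel G.Adj] : (G.adjMatrix ℝ).IsHermitian := by
  ext i j
  simp [Matrix.conjTranspose_apply, SimpleGraph.adjMatrix_apply, G.adj_comm]

/-- The energy of a graph: the sum of the absolute values of the eigenvalues
of its adjacency matrix. -/
noncomputable def graphEnergy {V : Type*} [Fintype V] [DecidableEq V]
    (G : SimpleGraph V) [DecidableRel G.Adj] : ℝ :=
  ∑ i, |(adjMatrix_isHermitian G).eigenvalues i|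

/-- The IRB irregularity index of a graph. -/
noncomputable def irb {V : Type*} [Fintype V] [DecidableEq V]
    (G : SimpleGraph V) [DecidableRel G.Adj] : ℝ :=
  ∑ e ∈ G.edgeFinset,
    Sym2.lift ⟨fun u v => (Real.sqrt (G.degree u) - Real.sqrt (G.degree v)) ^ 2,
      fun u v => by ring⟩ e

/-!
Write `x v = √(deg v)` and `S = ∑ v, x v`. Since `∑ v, x v ^ 2 = 2m`, Lagrange's identity gives
`∑ u, ∑ v, (x u - x v) ^ 2 = 2 (2mn - S²)`, and the ordered pairs of adjacent vertices contribute
exactly `2 · IRB(G)` to the left-hand side. Hence `S² ≤ 2mn - IRB(G)`, and `E(G) ≤ S` finishes.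
-/

open Finset

namespace SimpleGraph

variable {V : Type*} (G : SimpleGraph V) [Fintype V] [DecidableRel G.Adj]

theorem sum_darts_edge {M : Type*} [AddCommMonoid M] (f : Sym2 V → M) :
    ∑ d : G.Dart, f d.edge = 2 • ∑ e ∈ G.edgeFinset, f e := by
  classical
  rw [← sum_fiberwise_of_maps_to (g := Dart.edge) (t := G.edgeFinset) (by simp), smul_sum]
  refine sum_congr rfl fun e he => ?_
  rw [sum_congr rfl fun d hd => congrArg f (mem_filter.1 hd).2, sum_const,
    G.dart_edge_fiber_card e (mem_edgeFinset.1 he)]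

theorem sum_darts_le_sum_sum {M : Type*} [AddCommMonoid M] [PartialOrder M]
    [IsOrderedAddMonoid M] {g : V → V → M} (hg : ∀ u v, 0 ≤ g u v) :
    ∑ d : G.Dart, g d.fst d.snd ≤ ∑ u, ∑ v, g u v := by
  rw [← Fintype.sum_prod_type']
  exact (sum_map univ ⟨_, Dart.toProd_injective⟩ fun p => g p.1 p.2).symm.trans_le
    (sum_le_sum_of_subset_of_nonneg (subset_univ _) fun p _ _ => hg p.1 p.2)

theorem sum_sqrt_degree_sq : ∑ v, √(G.degree v : ℝ) ^ 2 = 2 * #G.edgeFinset := by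
  simp only [Real.sq_sqrt (Nat.cast_nonneg _)]
  exact_mod_cast G.sum_degrees_eq_twice_card_edges

theorem two_mul_irb [DecidableEq V] :
    2 * irb G = ∑ d : G.Dart, (√(G.degree d.fst : ℝ) - √(G.degree d.snd)) ^ 2 := by
  rw [irb, two_mul, ← two_nsmul, ← sum_darts_edge]
  rfl

end SimpleGraph

theorem stmt9_general {V : Type*} [Fintype V] [DecidableEq V] (G : SimpleGraph V)
    [DecidableRel G.Adj]
    (hE : graphEnergy G ≤ ∑ v : V, Real.sqrt (G.degree v)) :
    graphEnergy G ≤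
      Real.sqrt (2 * G.edgeFinset.card * (Fintype.card V : ℝ) - irb G) := by
  set x : V → ℝ := fun v => √(G.degree v)
  have hpairs := sum_sum_sub_sq univ x
  have hirb : 2 * irb G ≤ ∑ u, ∑ v, (x u - x v) ^ 2 :=
    G.two_mul_irb ▸ G.sum_darts_le_sum_sum fun u v => sq_nonneg (x u - x v)
  rw [card_univ, G.sum_sqrt_degree_sq] at hpairs
  calc graphEnergy G ≤ ∑ v, x v := hE
    _ = √((∑ v, x v) ^ 2) := (Real.sqrt_sq (sum_nonneg fun v _ => Real.sqrt_nonneg _)).symm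
    _ ≤ _ := Real.sqrt_le_sqrt (by linarith)

theorem stmt9 {V : Type*} [Fintype V] [DecidableEq V] (G : SimpleGraph V)
    [DecidableRel G.Adj] (hG : G.Connected)
    (hE : graphEnergy G ≤ ∑ v : V, Real.sqrt (G.degree v)) :
    graphEnergy G ≤
      Real.sqrt (2 * G.edgeFinset.card * (Fintype.card V : ℝ) - irb G) :=
  stmt9_general G hE
end

section
/- Let G be a connected bipartite graph on n vertices with m ≥ 1 edges. Then Mo(G) ≤ √(m²n² − 4m·Sz(G)), where Mo(G) = ∑_{e=(u,v)∈E}|n_e(u) − n_e(v)| is the Mostar index and Sz(G) = ∑_{e=(u,v)∈E} n_e(u)·n_e(v) is the Szeged index. -/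
/-! In a bipartite connected graph no vertex is equidistant from the two ends of an edge, since
two shortest walks of equal length from it would end at vertices of the same colour. Hence for
every edge `uv` the counts `n_e(u)` and `n_e(v)` add up to `n`, and each Mostar term satisfies
`|n_e(u) - n_e(v)|² = n² - 4 n_e(u) n_e(v)`. Cauchy–Schwarz over the `m` edges then gives
`Mo(G)² ≤ m (m n² - 4 Sz(G))`. -/

/-- The number of vertices strictly closer to `u` than to `v`. -/
noncomputable def closerCount {V : Type*} (G : SimpleGraph V) (u v : V) : ℕ :=
  ({w | G.dist w u < G.dist w v} : Set V).ncard

/-- The Mostar index of a graph. -/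
noncomputable def mostar {V : Type*} [Fintype V] [DecidableEq V]
    (G : SimpleGraph V) [DecidableRel G.Adj] : ℝ :=
  ∑ e ∈ G.edgeFinset,
    Sym2.lift ⟨fun u v => |(closerCount G u v : ℝ) - (closerCount G v u : ℝ)|,
      fun u v => abs_sub_comm _ _⟩ e

/-- The Szeged index of a graph. -/
noncomputable def szeged {V : Type*} [Fintype V] [DecidableEq V]
    (G : SimpleGraph V) [DecidableRel G.Adj] : ℝ :=
  ∑ e ∈ G.edgeFinset,
    Sym2.lift ⟨fun u v => (closerCount G u v : ℝ) * (closerCount G v u : ℝ),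
      fun u v => mul_comm _ _⟩ e

open Finset

namespace SimpleGraph

theorem Colorable.dist_ne_of_adj {V : Type*} {G : SimpleGraph V} (hbip : G.Colorable 2)
    {u v w : V} (hwu : G.Reachable w u) (huv : G.Adj u v) : G.dist w u ≠ G.dist w v := by
  obtain ⟨c⟩ := hbip
  let c' : G.Coloring Bool := G.recolorOfEquiv finTwoEquiv c
  obtain ⟨p, hp⟩ := hwu.exists_walk_length_eq_dist
  obtain ⟨q, hq⟩ := (hwu.trans huv.reachable).exists_walk_length_eq_dist
  intro h
  have hparity : Even p.length ↔ Even q.length := by rw [hp, hq, h]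
  rw [c'.even_length_iff_congr, c'.even_length_iff_congr] at hparity
  exact c'.valid huv (Bool.eq_iff_iff.mpr (by tauto))

end SimpleGraph

theorem closerCount_add_closerCount_of_adj {V : Type*} [Finite V] {G : SimpleGraph V}
    (hG : G.Connected) (hbip : G.Colorable 2) {u v : V} (huv : G.Adj u v) :
    closerCount G u v + closerCount G v u = Nat.card V := by
  have hcompl : {w | G.dist w v < G.dist w u} = {w | G.dist w u < G.dist w v}ᶜ := by
    ext w
    have := hbip.dist_ne_of_adj (hG.preconnected w u) huv
    simp only [Set.mem_ofPred_eq, Set.mem_compl_iff, not_lt]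
    omega
  rw [closerCount, closerCount, hcompl, Set.ncard_add_ncard_compl]

theorem mostar_sq_le {V : Type*} [Fintype V] [DecidableEq V] (G : SimpleGraph V)
    [DecidableRel G.Adj] (hG : G.Connected) (hbip : G.Colorable 2) :
    mostar G ^ 2 ≤ #G.edgeFinset * (#G.edgeFinset * (Fintype.card V : ℝ) ^ 2 - 4 * szeged G) := by
  calc mostar G ^ 2 ≤ #G.edgeFinset * ∑ e ∈ G.edgeFinset, _ := sq_sum_le_card_mul_sum_sq
    _ = #G.edgeFinset * (#G.edgeFinset * (Fintype.card V : ℝ) ^ 2 - 4 * szeged G) := by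
      congr 1
      rw [szeged, mul_sum, ← nsmul_eq_mul, ← sum_const, ← sum_sub_distrib]
      refine sum_congr rfl fun e he => ?_
      induction e using Sym2.ind with
      | _ u v =>
        have hsum : (closerCount G u v : ℝ) + closerCount G v u = Fintype.card V := by
          exact_mod_cast (closerCount_add_closerCount_of_adj hG hbip
            (G.mem_edgeFinset.mp he)).trans Nat.card_eq_fintype_card
        simp only [Sym2.lift_mk, sq_abs, ← hsum]
        ring

theorem stmt11_general {V : Type*} [Fintype V] [DecidableEq V] (G : SimpleGraph V)
    [DecidableRel G.Adj] (hG : G.Connected) (hbip : G.Colorable 2) :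
    mostar G ≤ Real.sqrt ((G.edgeFinset.card : ℝ) ^ 2 * (Fintype.card V : ℝ) ^ 2 -
      4 * G.edgeFinset.card * szeged G) :=
  Real.le_sqrt_of_sq_le ((mostar_sq_le G hG hbip).trans_eq (by ring))

theorem stmt11 {V : Type*} [Fintype V] [DecidableEq V] (G : SimpleGraph V)
    [DecidableRel G.Adj] (hG : G.Connected) (hbip : G.Colorable 2)
    (hm : 1 ≤ G.edgeFinset.card) :
    mostar G ≤ Real.sqrt ((G.edgeFinset.card : ℝ) ^ 2 * (Fintype.card V : ℝ) ^ 2 -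
      4 * G.edgeFinset.card * szeged G) :=
  stmt11_general G hG hbip
end

section
/- Let G be a connected graph of order n ≥ 3 and size m. Then 0 ≤ Mo(G) ≤ m(n−2), where Mo(G) = ∑_{e=(u,v)∈E}|n_e(u) − n_e(v)|. -/
namespace SimpleGraph

variable {V : Type*} (G : SimpleGraph V)

theorem closerCount_pos [Finite V] {u v : V} (huv : G.Adj u v) : 0 < closerCount G u v := by
  refine (Set.ncard_pos (Set.toFinite _)).mpr ⟨u, ?_⟩
  simp [dist_eq_one_iff_adj.mpr huv]

theorem closerCount_add_closerCount_le [Finite V] (u v : V) :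
    closerCount G u v + closerCount G v u ≤ Nat.card V := by
  have hdisj : Disjoint {w | G.dist w u < G.dist w v} {w | G.dist w v < G.dist w u} :=
    Set.disjoint_left.mpr fun _ hu hv => lt_asymm (α := ℕ) hu hv
  rw [closerCount, closerCount, ← Set.ncard_union_eq hdisj, ← Set.ncard_univ]
  exact Set.ncard_le_ncard (Set.subset_univ _)

theorem abs_closerCount_sub_closerCount_le [Fintype V] {u v : V} (huv : G.Adj u v) :
    |(closerCount G u v : ℝ) - closerCount G v u| ≤ Fintype.card V - 2 := by
  have hu : (1 : ℝ) ≤ closerCount G u v := by exact_mod_cast G.closerCount_pos huv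
  have hv : (1 : ℝ) ≤ closerCount G v u := by exact_mod_cast G.closerCount_pos huv.symm
  have hsum : (closerCount G u v : ℝ) + closerCount G v u ≤ Fintype.card V := by
    rw [← Nat.card_eq_fintype_card]; exact_mod_cast G.closerCount_add_closerCount_le u v
  rw [abs_sub_le_iff]
  constructor <;> linarith

variable [Fintype V] [DecidableEq V] [DecidableRel G.Adj]

theorem mostar_nonneg : 0 ≤ mostar G :=
  Finset.sum_nonneg fun e _ => e.ind fun _ _ => abs_nonneg _

theorem mostar_le_card_edgeFinset_mul :
    mostar G ≤ (G.edgeFinset.card : ℝ) * ((Fintype.card V : ℝ) - 2) := by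
  rw [← nsmul_eq_mul, ← Finset.sum_const]
  refine Finset.sum_le_sum fun e he => ?_
  induction e using Sym2.ind with
  | _ u v => exact G.abs_closerCount_sub_closerCount_le (G.mem_edgeFinset.mp he)

end SimpleGraph

theorem stmt14_general {V : Type*} [Fintype V] [DecidableEq V] (G : SimpleGraph V)
    [DecidableRel G.Adj] :
    0 ≤ mostar G ∧
      mostar G ≤ (G.edgeFinset.card : ℝ) * ((Fintype.card V : ℝ) - 2) :=
  ⟨G.mostar_nonneg, G.mostar_le_card_edgeFinset_mul⟩

theorem stmt14 {V : Type*} [Fintype V] [DecidableEq V] (G : SimpleGraph V)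
    [DecidableRel G.Adj] (hG : G.Connected) (hn : 3 ≤ Fintype.card V) :
    0 ≤ mostar G ∧
      mostar G ≤ (G.edgeFinset.card : ℝ) * ((Fintype.card V : ℝ) - 2) :=
  stmt14_general G
end

section
/- Let G be a connected graph of diameter 2. Then Mo(G) = Irr(G), where Mo(G) = ∑_{e=(u,v)∈E}|n_e(u) − n_e(v)| and Irr(G) = ∑_{(u,v)∈E}|deg(u) − deg(v)|. -/
/-!
In a graph of diameter at most 2, a vertex `w` is strictly closer to the end `u` of an edge `uv`
than to `v` exactly when `w = u` or `w` is a neighbour of `u` other than `v` that is not adjacent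
to `v`. Trading `u` for `v` in this set gives `N(u) \ N(v)`, so `n_uv(u) = deg u - |N(u) ∩ N(v)|`.
The common neighbours cancel in `n_uv(u) - n_uv(v)`, which is therefore `deg u - deg v`.
-/

namespace SimpleGraph

open Finset

variable {V : Type*} {G : SimpleGraph V}

lemma dist_le_two_of_ediam_le_two (hd : G.ediam ≤ 2) (w x : V) : G.dist w x ≤ 2 :=
  ENat.toNat_le_of_le_natCast (edist_le_ediam.trans hd)

lemma dist_lt_dist_iff_of_ediam_le_two (hd : G.ediam ≤ 2) {u v w : V} (huv : G.Adj u v) :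
    G.dist w u < G.dist w v ↔ w = u ∨ (w ≠ v ∧ G.Adj w u ∧ ¬G.Adj w v) := by
  have hconn : G.Preconnected :=
    preconnected_of_ediam_ne_top (ne_top_of_le_ne_top (by decide) hd)
  have hv2 := dist_le_two_of_ediam_le_two hd w v
  rw [ne_eq, ← (hconn w u).dist_eq_zero_iff, ← (hconn w v).dist_eq_zero_iff,
    ← dist_eq_one_iff_adj, ← dist_eq_one_iff_adj]
  have hboth : ¬(G.dist w u = 0 ∧ G.dist w v = 0) := by
    rw [(hconn w u).dist_eq_zero_iff, (hconn w v).dist_eq_zero_iff]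
    rintro ⟨rfl, rfl⟩
    exact G.irrefl huv
  omega

variable [Fintype V] [DecidableEq V] [DecidableRel G.Adj]

lemma closerCount_eq_card_sdiff (hd : G.ediam ≤ 2) {u v : V} (huv : G.Adj u v) :
    closerCount G u v = #(G.neighborFinset u \ G.neighborFinset v) := by
  have hset : {w | G.dist w u < G.dist w v} =
      ↑(insert u ((G.neighborFinset u \ G.neighborFinset v).erase v)) := by
    ext w
    simp only [Set.mem_ofPred_eq, dist_lt_dist_iff_of_ediam_le_two hd huv, Finset.coe_insert,
      Finset.coe_erase, Finset.coe_sdiff, coe_neighborFinset, Set.mem_insert_iff, Set.mem_sdiff,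
      mem_neighborSet, Set.mem_singleton_iff]
    grind [adj_comm]
  rw [closerCount, hset, Set.ncard_coe_finset, Finset.card_insert_of_notMem (by simp),
    Finset.card_erase_add_one (by simp [huv])]

lemma closerCount_sub_closerCount (hd : G.ediam ≤ 2) {u v : V} (huv : G.Adj u v) :
    (closerCount G u v : ℝ) - closerCount G v u = G.degree u - G.degree v := by
  have hu := Finset.card_sdiff_add_card_inter (G.neighborFinset u) (G.neighborFinset v)
  have hv := Finset.card_sdiff_add_card_inter (G.neighborFinset v) (G.neighborFinset u)
  rw [Finset.inter_comm] at hv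
  rw [closerCount_eq_card_sdiff hd huv, closerCount_eq_card_sdiff hd huv.symm,
    ← card_neighborFinset_eq_degree, ← card_neighborFinset_eq_degree, ← hu, ← hv]
  push_cast
  ring

end SimpleGraph

open SimpleGraph in
theorem stmt15_general {V : Type*} [Fintype V] [DecidableEq V] (G : SimpleGraph V)
    [DecidableRel G.Adj] (hdiam : G.diam = 2) :
    mostar G = albertson G := by
  have hd : G.ediam ≤ 2 := by
    rw [← ENat.natCast_toNat (ediam_ne_top_of_diam_ne_zero (by omega : G.diam ≠ 0))]
    exact_mod_cast hdiam.le
  refine Finset.sum_congr rfl fun e he => ?_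
  induction e using Sym2.ind with
  | _ u v =>
    simp only [Sym2.lift_mk]
    rw [closerCount_sub_closerCount hd (mem_edgeFinset.mp he)]

theorem stmt15 {V : Type*} [Fintype V] [DecidableEq V] (G : SimpleGraph V)
    [DecidableRel G.Adj] (hG : G.Connected) (hdiam : G.diam = 2) :
    mostar G = albertson G :=
  stmt15_general G hdiam
end
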